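/- arXiv:2402.07870 — 4 statements merged into one kernel-verified Lean document; each statement's English description precedes it below -/
import Mathlib

section
/- Let E ⊆ X × Y be measurable in a graded probability space. If E is ladder d-μ-stable (the set of μ-ladders of height d for E in Y^d has measure zero), then the transposed relation E* := {(y,x) ∈ Y × X : (x,y) ∈ E} is also ladder d-μ-stable. -/
open Set MeasureTheory
open scoped ENNReal

/-!
Call `(a, b) ∈ X^d × Y^d` an interlaced pair if `(a m, b j) ∈ E ↔ rev j ≤ m` for all `m, j`;
then `b` is a ladder for `E` witnessed by the points `a (rev i)`, and `a` is a ladder for `E*`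
witnessed by the points `b (rev j)`. The slice of the set of interlaced pairs over a ladder `a`
for `E*` is a box of positive measure, so if such `a` had positive measure then so would the
set of interlaced pairs; by Fubini its slices over a positive-measure set of `b` would then
have positive measure, and every such `b` is a ladder for `E`.
-/

/-- The set of μ-ladders of height `d` for `E ⊆ U × V`: tuples `b ∈ V^d` such that for
every `i < d` the set of `u` related to exactly the `b_j` with `i ≤ j` has positive
measure. -/
def muLadSet {U V : Type*} [MeasurableSpace U] (μU : Measure U)
    (E : Set (U × V)) (d : ℕ) : Set (Fin d → V) :=
  {b | ∀ i : Fin d, 0 < μU {u | ∀ j : Fin d, ((u, b j) ∈ E ↔ i ≤ j)}}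

namespace MeasureTheory.Measure

variable {α β : Type*} [MeasurableSpace α] [MeasurableSpace β]
  {μ : Measure α} {ν : Measure β} [SFinite μ] [SFinite ν]

theorem measure_eq_zero_of_slices {D : Set (α × β)} (hD : MeasurableSet D)
    {A : Set α} {B : Set β} (hA : ∀ a ∈ A, ν (Prod.mk a ⁻¹' D) ≠ 0)
    (hB : ∀ b, μ ((·, b) ⁻¹' D) ≠ 0 → b ∈ B) (hB0 : ν B = 0) : μ A = 0 := by
  have hDnull : μ.prod ν D = 0 := by
    rw [prod_apply_symm hD, lintegral_eq_zero_iff (measurable_measure_prodMk_right hD)]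
    filter_upwards [measure_eq_zero_iff_ae_notMem.1 hB0] with b hb
    exact not_not.1 (mt (hB b) hb)
  exact measure_mono_null hA (measure_ae_null_of_prod_null hDnull)

end MeasureTheory.Measure

section Ladder

variable {U V : Type*}

def ladderPairs (E : Set (U × V)) (d : ℕ) : Set ((Fin d → U) × (Fin d → V)) :=
  {p | ∀ m j : Fin d, ((p.1 m, p.2 j) ∈ E ↔ j.rev ≤ m)}

theorem measurableSet_ladderPairs [MeasurableSpace U] [MeasurableSpace V] {E : Set (U × V)}
    (hE : MeasurableSet E) (d : ℕ) : MeasurableSet (ladderPairs E d) :=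
  Measurable.setOf <| Measurable.forall fun m => Measurable.forall fun j =>
    (hE.mem.comp (by fun_prop)).iff measurable_const

theorem preimage_prodMk_ladderPairs (E : Set (U × V)) (d : ℕ) (a : Fin d → U) :
    Prod.mk a ⁻¹' ladderPairs E d =
      univ.pi fun j => {y | ∀ m : Fin d, ((a m, y) ∈ E ↔ j.rev ≤ m)} := by
  ext b
  simp only [ladderPairs, mem_preimage, mem_ofPred_eq, mem_univ_pi]
  exact forall_comm

theorem measure_preimage_prodMk_ladderPairs_ne_zero [MeasurableSpace V] {μ : Measure V}
    [SigmaFinite μ] {E : Set (U × V)} {d : ℕ} {a : Fin d → U}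
    (ha : a ∈ muLadSet μ {p : V × U | (p.2, p.1) ∈ E} d) :
    Measure.pi (fun _ => μ) (Prod.mk a ⁻¹' ladderPairs E d) ≠ 0 := by
  rw [preimage_prodMk_ladderPairs, Measure.pi_pi]
  exact Finset.prod_ne_zero_iff.2 fun j _ => (ha j.rev).ne'

theorem mem_muLadSet_of_measure_preimage_ladderPairs_ne_zero [MeasurableSpace U]
    {μ : Measure U} [SigmaFinite μ] {E : Set (U × V)} {d : ℕ} {b : Fin d → V}
    (hb : Measure.pi (fun _ => μ) ((·, b) ⁻¹' ladderPairs E d) ≠ 0) :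
    b ∈ muLadSet μ E d := by
  intro i
  have hslice : (·, b) ⁻¹' ladderPairs E d ⊆
      Function.eval i.rev ⁻¹' {u | ∀ j : Fin d, ((u, b j) ∈ E ↔ i ≤ j)} := fun a ha j => by
    simpa only [Fin.rev_le_rev] using ha i.rev j
  exact pos_iff_ne_zero.2 fun hi =>
    hb (measure_mono_null hslice (Measure.pi_eval_preimage_null (fun _ => μ) hi))

end Ladder

/-- If `E ⊆ X × Y` is ladder `d`-μ-stable, then so is the transposed relation
`E* ⊆ Y × X`. -/
theorem ladder_muStable_symm
    {X Y : Type*} [MeasurableSpace X] [MeasurableSpace Y]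
    (μX : Measure X) (μY : Measure Y)
    [IsProbabilityMeasure μX] [IsProbabilityMeasure μY]
    (E : Set (X × Y)) (hE : MeasurableSet E) (d : ℕ)
    (h : (Measure.pi fun _ : Fin d => μY) (muLadSet μX E d) = 0) :
    (Measure.pi fun _ : Fin d => μX)
      (muLadSet μY {p : Y × X | (p.2, p.1) ∈ E} d) = 0 :=
  Measure.measure_eq_zero_of_slices (measurableSet_ladderPairs hE d)
    (fun _ ha => measure_preimage_prodMk_ladderPairs_ne_zero ha)
    (fun _ hb => mem_muLadSet_of_measure_preimage_ladderPairs_ne_zero hb) h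
end

section
/- Let E₁ ⊆ X × Y₁ and E₂ ⊆ X × Y₂ be measurable relations in a graded probability space, both μ-stable (for some d, the set of trees of height d for each has measure zero). Then the relation E₁ ∧ E₂ := {(x,(y₁,y₂)) : (x,y₁) ∈ E₁ and (x,y₂) ∈ E₂} ⊆ X × (Y₁ × Y₂) is μ-stable, and the complement ¬E₁ := (X × Y₁) \ E₁ is μ-stable. -/
open Set MeasureTheory
open scoped ENNReal

/-- The index set `2^{<d}` of 0-1 sequences of length `< d`. -/
abbrev TreeIdx (d : ℕ) := (i : Fin d) × (Fin i.val → Bool)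

/-- The set of trees of height `d` for `E ⊆ U × V`. -/
def TreeSet {U V : Type*} (E : Set (U × V)) (d : ℕ) :
    Set (((Fin d → Bool) → U) × (TreeIdx d → V)) :=
  {p | ∀ (σ : Fin d → Bool) (i : Fin d),
    (p.1 σ, p.2 ⟨i, fun j => σ ⟨j.1, j.2.trans i.2⟩⟩) ∈ E ↔ σ i = true}

/-- `E` is `d`-μ-stable: the set of trees of height `d` for `E` has measure zero. -/
def TreeZero {U V : Type*} [MeasurableSpace U] [MeasurableSpace V]
    (μU : Measure U) (μV : Measure V) (E : Set (U × V)) (d : ℕ) : Prop :=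
  ((Measure.pi fun _ : Fin d → Bool => μU).prod
    (Measure.pi fun _ : TreeIdx d => μV)) (TreeSet E d) = 0

/-- `E` is μ-stable: `d`-μ-stable for some `d`. -/
def IsMuStable {U V : Type*} [MeasurableSpace U] [MeasurableSpace V]
    (μU : Measure U) (μV : Measure V) (E : Set (U × V)) : Prop :=
  ∃ d : ℕ, TreeZero μU μV E d

/-!
Colour each pair (leaf `σ`, node of its branch at level `i`) of a tree of height `D` for
`E₁ ∧ E₂` by whether the corresponding edge lies in `E₁`. Only pairs where the branch turns
left (`σ i = false`) carry information: there the edge misses `E₁ ∧ E₂`, so it misses `E₁`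
(colour `false`) or lies in `E₁` but misses `E₂` (colour `true`). A Ramsey theorem for such
colourings of complete binary trees gives, for `D` large, an embedded subtree of height `d₁`
whose left turns all have colour `false`, which is a tree for `E₁`, or one of height `d₂` whose
left turns all have colour `true`, which is a tree for `E₂`. It is proved by induction on
`(d₁, d₂)` like the bound for classical Ramsey numbers, after first making the colour at the
root constant along a large subtree of its left subtree (a Ramsey theorem for leaf colourings).

Restricting a random tree to a fixed embedded subtree preserves the product measure, so the
trees for `E₁ ∧ E₂` lie in a finite union of preimages of null sets. For `¬E₁`, negating every
bit turns trees for `¬E₁` into trees for `E₁`.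
-/

open Function

namespace TreeIdx

variable {d : ℕ}

def ancestor (σ : Fin d → Bool) (i : Fin d) : TreeIdx d := ⟨i, fun j => σ ⟨j.1, j.2.trans i.2⟩⟩

def succEquiv : Option (Bool × TreeIdx d) ≃ TreeIdx (d + 1) where
  toFun
    | none => ⟨0, Fin.elim0⟩
    | some (b, ⟨i, τ⟩) => ⟨i.succ, Fin.cons b τ⟩
  invFun
    | ⟨⟨0, _⟩, _⟩ => none
    | ⟨⟨i + 1, hi⟩, τ⟩ => some (τ 0, ⟨⟨i, Nat.lt_of_succ_lt_succ hi⟩, Fin.tail τ⟩)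
  left_inv
    | none => rfl
    | some (_, ⟨⟨_, _⟩, _⟩) => rfl
  right_inv
    | ⟨⟨0, _⟩, τ⟩ => by simp [Subsingleton.elim τ Fin.elim0]
    | ⟨⟨i + 1, hi⟩, τ⟩ => by simp

theorem ancestor_zero (σ : Fin (d + 1) → Bool) : ancestor σ 0 = succEquiv none :=
  Sigma.ext rfl (heq_of_eq (funext fun j => j.elim0))

theorem ancestor_succ (σ : Fin (d + 1) → Bool) (i : Fin d) :
    ancestor σ i.succ = succEquiv (some (σ 0, ancestor (Fin.tail σ) i)) :=
  Sigma.ext rfl (heq_of_eq (funext fun j => Fin.cases rfl (fun _ => rfl) j))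

end TreeIdx

open TreeIdx

theorem mem_treeSet {U V : Type*} {E : Set (U × V)} {d : ℕ}
    {p : ((Fin d → Bool) → U) × (TreeIdx d → V)} :
    p ∈ TreeSet E d ↔ ∀ σ i, (p.1 σ, p.2 (ancestor σ i)) ∈ E ↔ σ i = true :=
  Iff.rfl

/-- The ancestor of leaf `σ` at level `i` goes to the ancestor of `leaf σ` at level
`level σ i`, and the branch `leaf σ` leaves that node in the direction `σ i`. -/
structure TreeEmbedding (h D : ℕ) where
  leaf : (Fin h → Bool) → Fin D → Bool
  node : TreeIdx h → TreeIdx D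
  level : (Fin h → Bool) → Fin h → Fin D
  node_ancestor : ∀ σ i, node (ancestor σ i) = ancestor (leaf σ) (level σ i)
  leaf_level : ∀ σ i, leaf σ (level σ i) = σ i
  leaf_injective : Injective leaf
  node_injective : Injective node

namespace TreeEmbedding

variable {h D : ℕ}

instance : Finite (TreeEmbedding h D) :=
  Finite.of_injective (fun P => (P.leaf, P.node, P.level)) <| by
    rintro ⟨⟩ ⟨⟩ hPQ
    simp only [Prod.mk.injEq] at hPQ
    obtain ⟨rfl, rfl, rfl⟩ := hPQ
    rfl

protected def id (h : ℕ) : TreeEmbedding h h where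
  leaf := id
  node := id
  level _ := id
  node_ancestor _ _ := rfl
  leaf_level _ _ := rfl
  leaf_injective := injective_id
  node_injective := injective_id

def trans {H : ℕ} (P : TreeEmbedding h D) (Q : TreeEmbedding D H) : TreeEmbedding h H where
  leaf := Q.leaf ∘ P.leaf
  node := Q.node ∘ P.node
  level σ i := Q.level (P.leaf σ) (P.level σ i)
  node_ancestor σ i := by simp only [comp_apply, P.node_ancestor, Q.node_ancestor]
  leaf_level σ i := by simp only [comp_apply, Q.leaf_level, P.leaf_level]
  leaf_injective := Q.leaf_injective.comp P.leaf_injective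
  node_injective := Q.node_injective.comp P.node_injective

def const (σ₀ : Fin D → Bool) : TreeEmbedding 0 D where
  leaf _ := σ₀
  node x := x.1.elim0
  level _ i := i.elim0
  node_ancestor _ i := i.elim0
  leaf_level _ i := i.elim0
  leaf_injective _ _ _ := Subsingleton.elim _ _
  node_injective x := x.1.elim0

def child (b : Bool) : TreeEmbedding D (D + 1) where
  leaf σ := Fin.cons (α := fun _ => Bool) b σ
  node y := succEquiv (some (b, y))
  level _ := Fin.succ
  node_ancestor σ i := by rw [ancestor_succ, Fin.cons_zero, Fin.tail_cons]
  leaf_level σ i := Fin.cons_succ _ _ _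
  leaf_injective := Fin.cons_right_injective (α := fun _ => Bool) b
  node_injective :=
    succEquiv.injective.comp ((Option.some_injective _).comp (Prod.mk_right_injective b))

theorem nonempty_of_le (hle : h ≤ D) : Nonempty (TreeEmbedding h D) := by
  induction D, hle using Nat.le_induction with
  | base => exact ⟨.id h⟩
  | succ D _ ih => exact ⟨ih.some.trans (child false)⟩

/-- Root to root, and the `b`-subtree into the `b`-subtree along `A b`. -/
def join (A : Bool → TreeEmbedding h D) : TreeEmbedding (h + 1) (D + 1) where
  leaf σ := Fin.cons (σ 0) ((A (σ 0)).leaf (Fin.tail σ))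
  node := succEquiv ∘ Option.map (fun y => (y.1, (A y.1).node y.2)) ∘ succEquiv.symm
  level σ := Fin.cases 0 fun i => ((A (σ 0)).level (Fin.tail σ) i).succ
  node_ancestor σ i := by
    cases i using Fin.cases with
    | zero => simp [ancestor_zero]
    | succ i => simp [ancestor_succ, node_ancestor]
  leaf_level σ i := by
    cases i using Fin.cases with
    | zero => simp
    | succ i => simp [leaf_level, Fin.tail]
  leaf_injective σ σ' hσ := by
    have h0 : σ 0 = σ' 0 := by simpa using congrFun hσ 0
    simp only [h0, Fin.cons_right_injective _ |>.eq_iff] at hσ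
    rw [← Fin.cons_self_tail σ, ← Fin.cons_self_tail σ', h0, (A _).leaf_injective hσ]
  node_injective := by
    refine succEquiv.injective.comp (Option.map_injective ?_ |>.comp succEquiv.symm.injective)
    rintro ⟨b, y⟩ ⟨b', y'⟩ hy
    simp only [Prod.mk.injEq] at hy
    obtain ⟨rfl, hy⟩ := hy
    rw [(A b).node_injective hy]

end TreeEmbedding

/-- `c σ i` is the colour of the pair (leaf `σ`, node of the branch `σ` at level `i`). -/
abbrev Coloring (d : ℕ) := (Fin d → Bool) → Fin d → Bool

namespace TreeEmbedding

variable {h D : ℕ}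

def comap (P : TreeEmbedding h D) (c : Coloring D) : Coloring h :=
  fun σ i => c (P.leaf σ) (P.level σ i)

def IsMono (P : TreeEmbedding h D) (c : Coloring D) (k : Bool) : Prop :=
  ∀ σ i, σ i = false → c (P.leaf σ) (P.level σ i) = k

theorem isMono_trans {H : ℕ} {P : TreeEmbedding h D} {Q : TreeEmbedding D H} {c : Coloring H}
    {k : Bool} : (P.trans Q).IsMono c k ↔ P.IsMono (Q.comap c) k :=
  Iff.rfl

theorem isMono_not {P : TreeEmbedding h D} {c : Coloring D} {k : Bool} :
    P.IsMono (fun σ i => !c σ i) k ↔ P.IsMono c !k := by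
  simp only [IsMono, Bool.not_eq_eq_eq_not]

theorem isMono_join {A : Bool → TreeEmbedding h D} {c : Coloring (D + 1)} {k : Bool}
    (h₀ : (A false).IsMono ((child false).comap c) k)
    (h₁ : (A true).IsMono ((child true).comap c) k)
    (hroot : ∀ τ, c (Fin.cons false ((A false).leaf τ)) 0 = k) : (join A).IsMono c k := by
  intro σ i hσ
  cases i using Fin.cases with
  | zero => simpa [join, hσ] using hroot (Fin.tail σ)
  | succ i =>
    cases hb : σ 0
    · simpa [join, comap, child, hb] using h₀ (Fin.tail σ) i hσ
    · simpa [join, comap, child, hb] using h₁ (Fin.tail σ) i hσ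

end TreeEmbedding

open TreeEmbedding

theorem exists_leaf_eq_of_add_le : ∀ (p q n : ℕ), p + q ≤ n → ∀ γ : (Fin n → Bool) → Bool,
    (∃ P : TreeEmbedding p n, ∀ σ, γ (P.leaf σ) = false) ∨
      ∃ P : TreeEmbedding q n, ∀ σ, γ (P.leaf σ) = true
  | 0, q, n, hn, γ => by
    by_cases hγ : ∃ σ, γ σ = false
    · obtain ⟨σ, hσ⟩ := hγ
      exact .inl ⟨const σ, fun _ => hσ⟩
    · obtain ⟨P⟩ := nonempty_of_le (show q ≤ n by omega)
      exact .inr ⟨P, fun σ => by simpa using not_exists.mp hγ (P.leaf σ)⟩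
  | p + 1, q, 0, hn, _ => absurd hn (by omega)
  | p + 1, q, n + 1, hn, γ => by
    obtain ⟨F₀, h₀⟩ | ⟨G, hG⟩ :=
      exists_leaf_eq_of_add_le p q n (by omega) fun τ => γ ((child false).leaf τ)
    · obtain ⟨F₁, h₁⟩ | ⟨G, hG⟩ :=
        exists_leaf_eq_of_add_le p q n (by omega) fun τ => γ ((child true).leaf τ)
      · refine .inl ⟨join fun s => cond s F₁ F₀, fun σ => ?_⟩
        cases hb : σ 0
        · simpa [join, child, hb] using h₀ (Fin.tail σ)
        · simpa [join, child, hb] using h₁ (Fin.tail σ)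
      · exact .inr ⟨G.trans (child true), hG⟩
    · exact .inr ⟨G.trans (child false), hG⟩

def TreeRamsey (a b n : ℕ) : Prop :=
  ∀ c : Coloring n, (∃ P : TreeEmbedding a n, P.IsMono c false) ∨
    ∃ P : TreeEmbedding b n, P.IsMono c true

namespace TreeRamsey

variable {a b n : ℕ}

theorem symm (hR : TreeRamsey a b n) : TreeRamsey b a n := fun c => by
  simpa only [isMono_not, Bool.not_false, Bool.not_true, or_comm] using hR fun σ i => !c σ i

theorem mono (hR : TreeRamsey a b n) {N : ℕ} (hN : n ≤ N) : TreeRamsey a b N := fun c => by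
  obtain ⟨Q⟩ := nonempty_of_le hN
  exact (hR (Q.comap c)).imp (fun ⟨P, hP⟩ => ⟨P.trans Q, isMono_trans.2 hP⟩)
    fun ⟨P, hP⟩ => ⟨P.trans Q, isMono_trans.2 hP⟩

theorem exists_isMono_succ {M m : ℕ} (hM : TreeRamsey a (b + 1) M)
    (hm : TreeRamsey a (b + 1) m) (c : Coloring (m + 1)) (U : TreeEmbedding M m)
    (hU : ∀ τ, c (Fin.cons false (U.leaf τ)) 0 = false) :
    (∃ P : TreeEmbedding (a + 1) (m + 1), P.IsMono c false) ∨
      ∃ P : TreeEmbedding (b + 1) (m + 1), P.IsMono c true := by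
  obtain ⟨F₀, hF₀⟩ | ⟨G, hG⟩ := hM ((U.trans (child false)).comap c)
  · obtain ⟨F₁, hF₁⟩ | ⟨G, hG⟩ := hm ((child true).comap c)
    · exact .inl ⟨join fun s => cond s F₁ (F₀.trans U), isMono_join hF₀ hF₁ fun τ => hU _⟩
    · exact .inr ⟨G.trans (child true), isMono_trans.2 hG⟩
  · exact .inr ⟨G.trans (U.trans (child false)), isMono_trans.2 hG⟩

end TreeRamsey

theorem exists_treeRamsey : ∀ a b : ℕ, ∃ D, TreeRamsey a b D
  | 0, _ => ⟨0, fun _ => .inl ⟨const fun _ => false, fun _ i => i.elim0⟩⟩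
  | _ + 1, 0 => ⟨0, fun _ => .inr ⟨const fun _ => false, fun _ i => i.elim0⟩⟩
  | a + 1, b + 1 => by
    obtain ⟨D₁, h₁⟩ := exists_treeRamsey a (b + 1)
    obtain ⟨D₂, h₂⟩ := exists_treeRamsey (a + 1) b
    set M := max D₁ D₂
    have hD₁ : D₁ ≤ M := le_max_left _ _
    have hD₂ : D₂ ≤ M := le_max_right _ _
    refine ⟨M + M + 1, fun c => ?_⟩
    obtain ⟨U, hU⟩ | ⟨U, hU⟩ :=
      exists_leaf_eq_of_add_le M M (M + M) le_rfl fun τ => c (Fin.cons false τ) 0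
    · exact (h₁.mono hD₁).exists_isMono_succ (h₁.mono (by omega)) c U hU
    · have := (h₂.symm.mono hD₂).exists_isMono_succ (h₂.symm.mono (by omega))
        (fun σ i => !c σ i) U (by simpa using hU)
      simpa only [isMono_not, Bool.not_false, Bool.not_true, or_comm] using this

theorem measurePreserving_comp_of_injective {α β Z : Type*} [Fintype α] [Fintype β]
    [MeasurableSpace Z] (ν : Measure Z) [IsProbabilityMeasure ν] {g : α → β}
    (hg : Injective g) :
    MeasurePreserving (fun f : β → Z => f ∘ g) (Measure.pi fun _ => ν)
      (Measure.pi fun _ => ν) := by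
  refine ⟨by fun_prop, (Measure.pi_eq fun s hs => ?_).symm⟩
  have hpre : (fun f : β → Z => f ∘ g) ⁻¹' univ.pi s = univ.pi (extend g s fun _ => univ) := by
    ext f
    simp only [mem_preimage, mem_univ_pi, comp_apply]
    refine ⟨fun hf b => ?_, fun hf a => by simpa [hg.extend_apply] using hf (g a)⟩
    by_cases hb : ∃ a, g a = b
    · obtain ⟨a, rfl⟩ := hb
      simpa [hg.extend_apply] using hf a
    · simp [extend_apply' _ _ _ hb]
  rw [Measure.map_apply (by fun_prop) (.univ_pi hs), hpre, Measure.pi_pi]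
  calc ∏ b, ν (extend g s (fun _ => univ) b) = ∏ b, extend g (ν ∘ s) 1 b := by
        simp only [apply_extend ν, comp_def, measure_univ]
        rfl
    _ = ∏ a, ν (s a) := by
      rw [← tprod_fintype (L := .unconditional β), tprod_extend_one hg, tprod_fintype]
      rfl

section Pullback

variable {U V W : Type*} {h D : ℕ}

def treePullback (l : (Fin h → Bool) → Fin D → Bool) (n : TreeIdx h → TreeIdx D) (f : V → W) :
    ((Fin D → Bool) → U) × (TreeIdx D → V) → ((Fin h → Bool) → U) × (TreeIdx h → W) :=
  Prod.map (· ∘ l) fun g => f ∘ g ∘ n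

theorem measurePreserving_treePullback [MeasurableSpace U] [MeasurableSpace V]
    [MeasurableSpace W] {μU : Measure U} {μV : Measure V} {μW : Measure W}
    [IsProbabilityMeasure μU] [SigmaFinite μV] [IsProbabilityMeasure μW]
    {l : (Fin h → Bool) → Fin D → Bool} {n : TreeIdx h → TreeIdx D} {f : V → W}
    (hl : Injective l) (hn : Injective n) (hf : MeasurePreserving f μV μW) :
    MeasurePreserving (treePullback (U := U) l n f)
      ((Measure.pi fun _ => μU).prod (Measure.pi fun _ => μV))
      ((Measure.pi fun _ => μU).prod (Measure.pi fun _ => μW)) :=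
  (measurePreserving_comp_of_injective μU hl).prod <|
    (measurePreserving_comp_of_injective μW hn).comp (measurePreserving_pi _ _ fun _ => hf)

theorem TreeEmbedding.treePullback_mem_treeSet_iff (P : TreeEmbedding h D) {f : V → W}
    {E : Set (U × W)} {p : ((Fin D → Bool) → U) × (TreeIdx D → V)} :
    treePullback P.leaf P.node f p ∈ TreeSet E h ↔ ∀ σ i,
      (p.1 (P.leaf σ), f (p.2 (ancestor (P.leaf σ) (P.level σ i)))) ∈ E ↔
        P.leaf σ (P.level σ i) = true := by
  simp only [P.leaf_level, ← P.node_ancestor]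
  rfl

end Pullback

section Stability

variable {X Y Y₁ Y₂ : Type*}

theorem treeSet_and_subset {E₁ : Set (X × Y₁)} {E₂ : Set (X × Y₂)} {d₁ d₂ D : ℕ}
    (hR : TreeRamsey d₁ d₂ D) :
    TreeSet {p : X × Y₁ × Y₂ | (p.1, p.2.1) ∈ E₁ ∧ (p.1, p.2.2) ∈ E₂} D ⊆
      (⋃ P : TreeEmbedding d₁ D, treePullback P.leaf P.node Prod.fst ⁻¹' TreeSet E₁ d₁) ∪
        ⋃ P : TreeEmbedding d₂ D, treePullback P.leaf P.node Prod.snd ⁻¹' TreeSet E₂ d₂ := by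
  classical
  intro p hp
  simp only [mem_union, mem_iUnion, mem_preimage, TreeEmbedding.treePullback_mem_treeSet_iff]
  refine (hR fun τ j => decide ((p.1 τ, (p.2 (ancestor τ j)).1) ∈ E₁)).imp
    (fun ⟨P, hP⟩ => ⟨P, fun σ i => ?_⟩) fun ⟨P, hP⟩ => ⟨P, fun σ i => ?_⟩ <;>
  · have hpσ := mem_treeSet.1 hp (P.leaf σ) (P.level σ i)
    have hPσ := hP σ i
    rw [P.leaf_level] at hpσ ⊢
    cases hσ : σ i <;> simp_all

theorem treeSet_univ_diff_subset {E : Set (X × Y)} {d : ℕ} :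
    TreeSet (univ \ E) d ⊆
      treePullback (not ∘ ·) (Sigma.map id fun _ => (not ∘ ·)) id ⁻¹' TreeSet E d := by
  intro p hp
  refine mem_treeSet.2 fun σ i => ?_
  have hpσ := mem_treeSet.1 hp (not ∘ σ) i
  change (p.1 (not ∘ σ), p.2 (ancestor (not ∘ σ) i)) ∈ E ↔ σ i = true
  cases hσ : σ i <;> simp_all

variable [MeasurableSpace X] [MeasurableSpace Y] [MeasurableSpace Y₁] [MeasurableSpace Y₂]
  {μX : Measure X} [IsProbabilityMeasure μX]

theorem TreeZero.and {μY₁ : Measure Y₁} {μY₂ : Measure Y₂} [IsProbabilityMeasure μY₁]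
    [IsProbabilityMeasure μY₂] {E₁ : Set (X × Y₁)} {E₂ : Set (X × Y₂)} {d₁ d₂ D : ℕ}
    (h₁ : TreeZero μX μY₁ E₁ d₁) (h₂ : TreeZero μX μY₂ E₂ d₂) (hR : TreeRamsey d₁ d₂ D) :
    TreeZero μX (μY₁.prod μY₂) {p : X × Y₁ × Y₂ | (p.1, p.2.1) ∈ E₁ ∧ (p.1, p.2.2) ∈ E₂} D :=
  measure_mono_null (treeSet_and_subset hR) <| measure_union_null
    (measure_iUnion_null fun P => (measurePreserving_treePullback P.leaf_injective
      P.node_injective measurePreserving_fst).quasiMeasurePreserving.preimage_null h₁)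
    (measure_iUnion_null fun P => (measurePreserving_treePullback P.leaf_injective
      P.node_injective measurePreserving_snd).quasiMeasurePreserving.preimage_null h₂)

theorem TreeZero.univ_diff {μY : Measure Y} [IsProbabilityMeasure μY] {E : Set (X × Y)}
    {d : ℕ} (h : TreeZero μX μY E d) : TreeZero μX μY (univ \ E) d :=
  measure_mono_null treeSet_univ_diff_subset <|
    (measurePreserving_treePullback Bool.not_injective.comp_left
      (injective_id.sigma_map fun _ => Bool.not_injective.comp_left)
      (.id μY)).quasiMeasurePreserving.preimage_null h

end Stability

theorem isMuStable_and_and_not_general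
    {X Y₁ Y₂ : Type*} [MeasurableSpace X] [MeasurableSpace Y₁] [MeasurableSpace Y₂]
    (μX : Measure X) (μY₁ : Measure Y₁) (μY₂ : Measure Y₂)
    [IsProbabilityMeasure μX] [IsProbabilityMeasure μY₁] [IsProbabilityMeasure μY₂]
    (E₁ : Set (X × Y₁)) (E₂ : Set (X × Y₂))
    (h₁ : IsMuStable μX μY₁ E₁) (h₂ : IsMuStable μX μY₂ E₂) :
    IsMuStable μX (μY₁.prod μY₂)
        {p : X × Y₁ × Y₂ | (p.1, p.2.1) ∈ E₁ ∧ (p.1, p.2.2) ∈ E₂} ∧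
      IsMuStable μX μY₁ ((univ : Set (X × Y₁)) \ E₁) := by
  obtain ⟨d₁, h₁⟩ := h₁
  obtain ⟨d₂, h₂⟩ := h₂
  obtain ⟨D, hD⟩ := exists_treeRamsey d₁ d₂
  exact ⟨⟨D, h₁.and h₂ hD⟩, ⟨d₁, h₁.univ_diff⟩⟩

/-- μ-stability is preserved under conjunction and negation. -/
theorem isMuStable_and_and_not
    {X Y₁ Y₂ : Type*} [MeasurableSpace X] [MeasurableSpace Y₁] [MeasurableSpace Y₂]
    (μX : Measure X) (μY₁ : Measure Y₁) (μY₂ : Measure Y₂)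
    [IsProbabilityMeasure μX] [IsProbabilityMeasure μY₁] [IsProbabilityMeasure μY₂]
    (E₁ : Set (X × Y₁)) (E₂ : Set (X × Y₂))
    (hE₁ : MeasurableSet E₁) (hE₂ : MeasurableSet E₂)
    (h₁ : IsMuStable μX μY₁ E₁) (h₂ : IsMuStable μX μY₂ E₂) :
    IsMuStable μX (μY₁.prod μY₂)
        {p : X × Y₁ × Y₂ | (p.1, p.2.1) ∈ E₁ ∧ (p.1, p.2.2) ∈ E₂} ∧
      IsMuStable μX μY₁ ((univ : Set (X × Y₁)) \ E₁) :=
  isMuStable_and_and_not_general μX μY₁ μY₂ E₁ E₂ h₁ h₂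
end

section
/- Let E ⊆ X × Y × Z be measurable in a graded probability space. If E is partition-wise d-μ-stable (for each way of separating one coordinate from the other two, the resulting binary relation is d-μ-stable), then E is slice-wise d-μ-stable: for almost every x ∈ X the slice E_x ⊆ Y × Z is d-μ-stable, and similarly for slices E_y and E_z. -/
open Set MeasureTheory
open scoped ENNReal

/-! Let `E ⊆ U × (C × V)` be `d`-μ-stable and let `A_q` be the set of `c` for which
`q = (a, b)` is a tree of the slice `E_c`. If `c_τ ∈ A_q` for every node `τ`, then
`(a, (c_τ, b_τ)_τ)` is a tree of `E`; drawing the labels `c_τ` independently, this is a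
measure-preserving image, so by Fubini `∫ μ(A_q)^{2^d - 1} dq = 0`. Hence `A_q` is null for
almost every `q`, and Fubini once more shows that the trees of `E_c` are null for almost every
`c`. Slicing at `x` uses the stability of `E` as a relation on `Y × (X × Z)`; slicing at `y` or
`z` uses it as a relation on `X × (Y × Z)`. -/

lemma measurableSet_treeSet {U V : Type*} [MeasurableSpace U] [MeasurableSpace V]
    {E : Set (U × V)} (hE : MeasurableSet E) (d : ℕ) : MeasurableSet (TreeSet E d) :=
  Measurable.setOf <| .forall fun σ => .forall fun i => .iff (hE.mem.comp (by fun_prop))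
    measurable_const

lemma treeSet_preimage_prodMap {U V W : Type*} (E : Set (U × W)) (f : V → W) (d : ℕ) :
    TreeSet (Prod.map id f ⁻¹' E) d = Prod.map id (fun b τ => f (b τ)) ⁻¹' TreeSet E d :=
  rfl

lemma treeSet_zero {U V : Type*} (E : Set (U × V)) : TreeSet E 0 = univ :=
  eq_univ_of_forall fun _ _ i => i.elim0

lemma treeZero_zero_iff {U V : Type*} [MeasurableSpace U] [MeasurableSpace V]
    (μU : Measure U) (μV : Measure V) [SigmaFinite μU] [SigmaFinite μV] (E : Set (U × V)) :
    TreeZero μU μV E 0 ↔ μU = 0 := by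
  rw [TreeZero, treeSet_zero, ← univ_prod_univ, Measure.prod_prod, Measure.pi_univ,
    Measure.pi_univ, ← Measure.measure_univ_eq_zero]
  simp

lemma TreeZero.preimage_prodMap {U V W : Type*} [MeasurableSpace U] [MeasurableSpace V]
    [MeasurableSpace W] {μU : Measure U} {μV : Measure V} {μW : Measure W}
    [SigmaFinite μU] [SigmaFinite μV] [SigmaFinite μW] {E : Set (U × W)}
    (hE : MeasurableSet E) {d : ℕ} (h : TreeZero μU μW E d) {f : V → W}
    (hf : MeasurePreserving f μV μW) : TreeZero μU μV (Prod.map id f ⁻¹' E) d := by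
  rw [TreeZero, treeSet_preimage_prodMap]
  rwa [((MeasurePreserving.id _).prod (measurePreserving_pi _ _ fun _ => hf)).measure_preimage
    (measurableSet_treeSet hE d).nullMeasurableSet]

lemma ae_measure_preimage_eq_zero_of_forall_pi_null {Q C T : Type*} [MeasurableSpace Q]
    [MeasurableSpace C] [Fintype T] [Nonempty T] {ρ : Measure Q} {μ : Measure C}
    [SigmaFinite ρ] [SigmaFinite μ] {S : Set (Q × C)} (hS : MeasurableSet S)
    (h : (ρ.prod (Measure.pi fun _ : T => μ)) {p | ∀ τ, (p.1, p.2 τ) ∈ S} = 0) :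
    ∀ᵐ c ∂μ, ρ {q | (q, c) ∈ S} = 0 := by
  have hB : MeasurableSet {p : Q × (T → C) | ∀ τ, (p.1, p.2 τ) ∈ S} :=
    Measurable.setOf <| .forall fun τ => hS.mem.comp (by fun_prop)
  have hsections : ∀ᵐ q ∂ρ, μ (Prod.mk q ⁻¹' S) = 0 := by
    filter_upwards [(Measure.measure_prod_null hB).1 h] with q hq
    have hpow : Prod.mk q ⁻¹' {p : Q × (T → C) | ∀ τ, (p.1, p.2 τ) ∈ S} =
        univ.pi fun _ => Prod.mk q ⁻¹' S := by
      ext; simp [mem_pi]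
    simp only [Pi.zero_apply, hpow, Measure.pi_pi, Finset.prod_const] at hq
    exact (pow_eq_zero_iff Finset.univ_nonempty.card_pos.ne').1 hq
  have hnull : (μ.prod ρ) (Prod.swap ⁻¹' S) = 0 := by
    rw [Measure.measurePreserving_swap.measure_preimage hS.nullMeasurableSet]
    exact (Measure.measure_prod_null hS).2 hsections
  exact Measure.measure_ae_null_of_prod_null hnull

lemma TreeZero.ae_slice {U C V : Type*} [MeasurableSpace U] [MeasurableSpace C]
    [MeasurableSpace V] {μU : Measure U} {μC : Measure C} {μV : Measure V}
    [SigmaFinite μU] [SigmaFinite μC] [SigmaFinite μV] {E : Set (U × C × V)}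
    (hE : MeasurableSet E) {d : ℕ} (h : TreeZero μU (μC.prod μV) E d) :
    ∀ᵐ c ∂μC, TreeZero μU μV {p : U × V | (p.1, c, p.2) ∈ E} d := by
  rcases Nat.eq_zero_or_pos d with rfl | hd
  · rw [treeZero_zero_iff] at h
    exact .of_forall fun _ => (treeZero_zero_iff _ _ _).2 h
  have : Nonempty (TreeIdx d) := ⟨⟨⟨0, hd⟩, Fin.elim0⟩⟩
  set S : Set ((((Fin d → Bool) → U) × (TreeIdx d → V)) × C) :=
    {p | p.1 ∈ TreeSet {q : U × V | (q.1, p.2, q.2) ∈ E} d}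
  have hS : MeasurableSet S :=
    (measurableSet_treeSet hE d).preimage
      (f := fun p : (((Fin d → Bool) → U) × (TreeIdx d → V)) × C =>
        (p.1.1, fun τ => (p.2, p.1.2 τ))) (by fun_prop)
  set zip : (((Fin d → Bool) → U) × (TreeIdx d → V)) × (TreeIdx d → C) →
      ((Fin d → Bool) → U) × (TreeIdx d → C × V) :=
    fun p => (p.1.1, fun τ => (p.2 τ, p.1.2 τ))
  have hzip : MeasurePreserving zip
      (((Measure.pi fun _ => μU).prod (Measure.pi fun _ => μV)).prod (Measure.pi fun _ => μC))
      ((Measure.pi fun _ => μU).prod (Measure.pi fun _ => μC.prod μV)) :=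
    (((MeasurePreserving.id _).prod
      ((measurePreserving_arrowProdEquivProdArrow C V _ _ _).symm _)).comp
      ((MeasurePreserving.id _).prod Measure.measurePreserving_swap)).comp
      (measurePreserving_prodAssoc _ _ _)
  refine ae_measure_preimage_eq_zero_of_forall_pi_null (T := TreeIdx d) hS
    (measure_mono_null (t := zip ⁻¹' TreeSet E d) (fun p hp σ i => hp _ σ i) ?_)
  rwa [hzip.measure_preimage (measurableSet_treeSet hE d).nullMeasurableSet]

theorem partitionWise_muStable_implies_sliceWise_general
    {X Y Z : Type*} [MeasurableSpace X] [MeasurableSpace Y] [MeasurableSpace Z]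
    (μX : Measure X) (μY : Measure Y) (μZ : Measure Z)
    [IsProbabilityMeasure μX] [IsProbabilityMeasure μY] [IsProbabilityMeasure μZ]
    (E : Set (X × Y × Z)) (hE : MeasurableSet E) (d : ℕ)
    (hX : TreeZero μX (μY.prod μZ) E d)
    (hY : TreeZero μY (μX.prod μZ) {p : Y × X × Z | (p.2.1, p.1, p.2.2) ∈ E} d) :
    (∀ᵐ x ∂μX, TreeZero μY μZ {p : Y × Z | (x, p.1, p.2) ∈ E} d) ∧
      (∀ᵐ y ∂μY, TreeZero μX μZ {p : X × Z | (p.1, y, p.2) ∈ E} d) ∧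
      (∀ᵐ z ∂μZ, TreeZero μX μY {p : X × Y | (p.1, p.2, z) ∈ E} d) := by
  have hE_YXZ : MeasurableSet {p : Y × X × Z | (p.2.1, p.1, p.2.2) ∈ E} :=
    hE.preimage (by fun_prop)
  have hE_XZY : MeasurableSet (Prod.map id Prod.swap ⁻¹' E : Set (X × Z × Y)) :=
    hE.preimage (by fun_prop)
  exact ⟨hY.ae_slice hE_YXZ, hX.ae_slice hE,
    (hX.preimage_prodMap hE Measure.measurePreserving_swap).ae_slice hE_XZY⟩

/-- Partition-wise `d`-μ-stability of a ternary relation implies slice-wise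
`d`-μ-stability. -/
theorem partitionWise_muStable_implies_sliceWise
    {X Y Z : Type*} [MeasurableSpace X] [MeasurableSpace Y] [MeasurableSpace Z]
    (μX : Measure X) (μY : Measure Y) (μZ : Measure Z)
    [IsProbabilityMeasure μX] [IsProbabilityMeasure μY] [IsProbabilityMeasure μZ]
    (E : Set (X × Y × Z)) (hE : MeasurableSet E) (d : ℕ)
    (hX : TreeZero μX (μY.prod μZ) E d)
    (hY : TreeZero μY (μX.prod μZ) {p : Y × X × Z | (p.2.1, p.1, p.2.2) ∈ E} d)
    (hZ : TreeZero μZ (μX.prod μY) {p : Z × X × Y | (p.2.1, p.2.2, p.1) ∈ E} d) :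
    (∀ᵐ x ∂μX, TreeZero μY μZ {p : Y × Z | (x, p.1, p.2) ∈ E} d) ∧
      (∀ᵐ y ∂μY, TreeZero μX μZ {p : X × Z | (p.1, y, p.2) ∈ E} d) ∧
      (∀ᵐ z ∂μZ, TreeZero μX μY {p : X × Y | (p.1, p.2, z) ∈ E} d) :=
  partitionWise_muStable_implies_sliceWise_general μX μY μZ E hE d hX hY
end

section
/- Let E ⊆ X × Y × Z be measurable in a graded probability space. Suppose X₀ ⊆ X is measurable and perfect for E viewed as a binary relation on X × (Y × Z), and Y₀ ⊆ Y is measurable and perfect for E viewed as a binary relation on Y × (X × Z), both of positive measure. Then X₀ × Y₀ is perfect for E viewed as a binary relation on (X × Y) × Z. -/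
/-!
Perfectness of `A` for `R` says that for a.e. `v` the fibre `R_v` does not split `A`. By Fubini,
for a.e. `z` neither `X₀` nor `Y₀` is split by the fibres of the slice `E_z ⊆ X × Y`, and a 0-1
argument shows that then `E_z` does not split `X₀ × Y₀`. Let `T ⊆ X₀` be the set of `x` whose
fibre contains almost all of `Y₀`. If `T` is null, almost every fibre over `X₀` is null on `Y₀`,
so `E_z` is null on `X₀ × Y₀`. Otherwise, for a.e. `y ∈ Y₀` the fibre over `y` contains almost
all of `T`, so it is not null on `X₀`, hence conull on `X₀`; so `E_z` is conull on `X₀ × Y₀`.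
-/

open Set MeasureTheory
open scoped ENNReal

/-- `A` is perfect for `R ⊆ U × V`: the set of `v` whose fiber μ-splits `A` has measure
zero. -/
def PerfectFor {U V : Type*} [MeasurableSpace U] [MeasurableSpace V]
    (μU : Measure U) (μV : Measure V) (R : Set (U × V)) (A : Set U) : Prop :=
  μV {v | 0 < μU (A ∩ {u | (u, v) ∈ R}) ∧ 0 < μU (A \ {u | (u, v) ∈ R})} = 0

namespace MeasureTheory

variable {α β : Type*} [MeasurableSpace α] [MeasurableSpace β]

def Measure.Splits (μ : Measure α) (S A : Set α) : Prop :=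
  0 < μ (A ∩ S) ∧ 0 < μ (A \ S)

theorem Measure.not_splits_iff_ae {μ : Measure α} {S A : Set α} :
    ¬ μ.Splits S A ↔ (∀ᵐ x ∂μ, x ∈ A → x ∉ S) ∨ ∀ᵐ x ∂μ, x ∈ A → x ∈ S := by
  simp only [Splits, not_and_or, not_lt, nonpos_iff_eq_zero, ae_iff, Classical.not_imp, not_not]
  rfl

theorem Measure.ae_ae_of_ae_prod_swap {μ : Measure α} {ν : Measure β} [SFinite μ] [SFinite ν]
    {p : α × β → Prop} (h : ∀ᵐ z ∂μ.prod ν, p z) : ∀ᵐ y ∂ν, ∀ᵐ x ∂μ, p (x, y) :=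
  ae_ae_of_ae_prod <| (measurePreserving_swap (μ := ν) (ν := μ)).quasiMeasurePreserving.ae h

theorem measurableSet_setOf_ae_mem {ν : Measure β} [SFinite ν] {W : Set (α × β)}
    (hW : MeasurableSet W) : MeasurableSet {x | ∀ᵐ y ∂ν, (x, y) ∈ W} := by
  simp only [ae_iff]
  exact measurable_measure_prodMk_left hW.compl (measurableSet_singleton 0)

theorem Measure.not_splits_prod {μ : Measure α} {ν : Measure β} [SFinite μ] [SFinite ν]
    {W : Set (α × β)} (hW : MeasurableSet W) {s : Set α} {t : Set β}
    (hs : MeasurableSet s) (ht : MeasurableSet t)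
    (h₁ : ∀ᵐ y ∂ν, ¬ μ.Splits {x | (x, y) ∈ W} s)
    (h₂ : ∀ᵐ x ∂μ, ¬ ν.Splits {y | (x, y) ∈ W} t) :
    ¬ (μ.prod ν).Splits W (s ×ˢ t) := by
  simp only [not_splits_iff_ae, mem_ofPred_eq] at h₁ h₂ ⊢
  set T := {x | x ∈ s ∧ ∀ᵐ y ∂ν, y ∈ t → (x, y) ∈ W}
  have hT : MeasurableSet T :=
    hs.inter <| measurableSet_setOf_ae_mem <| (measurable_snd ht).himp hW
  by_cases hT0 : μ T = 0
  · left
    have hst : MeasurableSet {z : α × β | z ∈ s ×ˢ t → z ∉ W} := (hs.prod ht).himp hW.compl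
    rw [ae_prod_iff_ae_ae hst]
    filter_upwards [h₂, measure_eq_zero_iff_ae_notMem.mp hT0] with x hx hxT
    by_cases hxs : x ∈ s
    · exact (hx.resolve_right fun h ↦ hxT ⟨hxs, h⟩).mono fun y hy hxy ↦ hy hxy.2
    · exact .of_forall fun y hxy ↦ absurd hxy.1 hxs
  · right
    have hTW : ∀ᵐ y ∂ν, ∀ᵐ x ∂μ, x ∈ T → y ∈ t → (x, y) ∈ W := by
      rw [← ae_ae_comm ((measurable_fst hT).himp ((measurable_snd ht).himp hW))]
      exact .of_forall fun x ↦ Filter.eventually_imp_distrib_left.2 fun hx ↦ hx.2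
    have hst : MeasurableSet {z : α × β | z ∈ s ×ˢ t → z ∈ W} := (hs.prod ht).himp hW
    rw [ae_prod_iff_ae_ae hst, ae_ae_comm hst]
    filter_upwards [h₁, hTW] with y hy hyT
    by_cases hyt : y ∈ t
    · refine (hy.resolve_left fun h ↦ hT0 ?_).mono fun x hx hxy ↦ hx hxy.1
      exact measure_eq_zero_iff_ae_notMem.2 <|
        (h.and hyT).mono fun x hx hxT ↦ hx.1 hxT.1 (hx.2 hxT hyt)
    · exact .of_forall fun x hxy ↦ absurd hxy.2 hyt

end MeasureTheory

theorem perfectFor_iff_ae {U V : Type*} [MeasurableSpace U] [MeasurableSpace V]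
    {μ : Measure U} {ν : Measure V} {R : Set (U × V)} {A : Set U} :
    PerfectFor μ ν R A ↔ ∀ᵐ v ∂ν, ¬ μ.Splits {u | (u, v) ∈ R} A := by
  rw [PerfectFor, ae_iff]
  simp only [Measure.Splits, not_not]

theorem product_of_perfect_is_perfect_general
    {X Y Z : Type*} [MeasurableSpace X] [MeasurableSpace Y] [MeasurableSpace Z]
    (μX : Measure X) (μY : Measure Y) (μZ : Measure Z)
    [IsProbabilityMeasure μX] [IsProbabilityMeasure μY] [IsProbabilityMeasure μZ]
    (E : Set (X × Y × Z)) (hE : MeasurableSet E)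
    (X₀ : Set X) (Y₀ : Set Y) (hX₀ : MeasurableSet X₀) (hY₀ : MeasurableSet Y₀)
    (hXperf : PerfectFor μX (μY.prod μZ) E X₀)
    (hYperf : PerfectFor μY (μX.prod μZ) {p : Y × X × Z | (p.2.1, p.1, p.2.2) ∈ E} Y₀) :
    PerfectFor (μX.prod μY) μZ
      {p : (X × Y) × Z | (p.1.1, p.1.2, p.2) ∈ E} (X₀ ×ˢ Y₀) := by
  rw [perfectFor_iff_ae] at hXperf hYperf ⊢
  filter_upwards [Measure.ae_ae_of_ae_prod_swap hXperf, Measure.ae_ae_of_ae_prod_swap hYperf]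
    with z hzX hzY
  exact Measure.not_splits_prod (hE.preimage (by fun_prop)) hX₀ hY₀ hzX hzY

/-- Products of perfect sets are perfect: if `X₀` is perfect for `E` on `X × (Y × Z)` and
`Y₀` is perfect for `E` on `Y × (X × Z)`, then `X₀ × Y₀` is perfect for `E` on
`(X × Y) × Z`. -/
theorem product_of_perfect_is_perfect
    {X Y Z : Type*} [MeasurableSpace X] [MeasurableSpace Y] [MeasurableSpace Z]
    (μX : Measure X) (μY : Measure Y) (μZ : Measure Z)
    [IsProbabilityMeasure μX] [IsProbabilityMeasure μY] [IsProbabilityMeasure μZ]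
    (E : Set (X × Y × Z)) (hE : MeasurableSet E)
    (X₀ : Set X) (Y₀ : Set Y) (hX₀ : MeasurableSet X₀) (hY₀ : MeasurableSet Y₀)
    (hX₀0 : 0 < μX X₀) (hY₀0 : 0 < μY Y₀)
    (hXperf : PerfectFor μX (μY.prod μZ) E X₀)
    (hYperf : PerfectFor μY (μX.prod μZ) {p : Y × X × Z | (p.2.1, p.1, p.2.2) ∈ E} Y₀) :
    PerfectFor (μX.prod μY) μZ
      {p : (X × Y) × Z | (p.1.1, p.1.2, p.2) ∈ E} (X₀ ×ˢ Y₀) :=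
  product_of_perfect_is_perfect_general μX μY μZ E hE X₀ Y₀ hX₀ hY₀ hXperf hYperf
end
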